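/- arXiv:2601.15609 — 2 statements merged into one kernel-verified Lean document; each statement's English description precedes it below -/
import Mathlib

section
/- Under the setup of the partition-function lower bound, suppose advantages are normalized binary: A₊ = (1 − p⁺)/σ and A₋ = −p⁺/σ for some batch accuracy p⁺ ∈ [0,1] and σ > 0, with Σ_{i∈S⁺} N(i) = G·p⁺ and Σ_{j∈S⁻} N(j) = G·(1 − p⁺). Define Δπ = min_{i∈S⁺} π_ref(i) − max_{j∈S⁻} π_ref(j). Then Z' ≥ 1 + (p⁺(1 − p⁺)/(βσ))·Δπ. In particular, if Δπ > 0 and 0 < p⁺ < 1 then Z' > 1, and hence every unsampled mode is strictly suppressed: π̂(o) < π_ref(o) whenever N(o) = 0. -/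
/-!
Linearising the exponential, `exp x ≥ 1 + x`, and using `∑ π_ref = 1` gives
`Z' ≥ 1 + (∑ₒ π_ref(o) N(o) A(o)) / (βG)`. Only sampled modes contribute to the sum.
On `S⁺` the advantage `A₊ ≥ 0` multiplies reference probabilities that are at least
`min_{S⁺} π_ref`, and on `S⁻` the advantage `A₋ ≤ 0` multiplies ones that are at most
`max_{S⁻} π_ref`. With the count identities the sum is therefore at least
`G p⁺ (1 - p⁺) Δπ / σ`. If `Z' > 1`, a mode with `N(o) = 0` keeps its reference weight
in the numerator of `π̂` and so loses mass.
-/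

open Finset

theorem Real.one_add_sum_mul_le_sum_mul_exp {ι : Type*} (s : Finset ι) (w x : ι → ℝ)
    (hw : ∀ i ∈ s, 0 ≤ w i) (hw1 : ∑ i ∈ s, w i = 1) :
    1 + ∑ i ∈ s, w i * x i ≤ ∑ i ∈ s, w i * Real.exp (x i) := by
  rw [← hw1, ← sum_add_distrib]
  refine sum_le_sum fun i hi => ?_
  rw [← mul_one_add]
  exact mul_le_mul_of_nonneg_left (by linarith [Real.add_one_le_exp (x i)]) (hw i hi)

section WeightedBounds

variable {ι R : Type*} [Semiring R] [LinearOrder R] [IsOrderedRing R] {s : Finset ι}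

theorem Finset.inf'_mul_sum_le_sum_mul (hs : s.Nonempty) (f n : ι → R)
    (hn : ∀ i ∈ s, 0 ≤ n i) : s.inf' hs f * ∑ i ∈ s, n i ≤ ∑ i ∈ s, f i * n i := by
  rw [mul_sum]
  exact sum_le_sum fun i hi => mul_le_mul_of_nonneg_right (inf'_le f hi) (hn i hi)

theorem Finset.sum_mul_le_sup'_mul_sum (hs : s.Nonempty) (f n : ι → R)
    (hn : ∀ i ∈ s, 0 ≤ n i) : ∑ i ∈ s, f i * n i ≤ s.sup' hs f * ∑ i ∈ s, n i := by
  rw [mul_sum]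
  exact sum_le_sum fun i hi => mul_le_mul_of_nonneg_right (le_sup' f hi) (hn i hi)

end WeightedBounds

theorem sum_mul_binary_advantage_ge {O : Type*} [Fintype O] [DecidableEq O]
    (pref n A : O → ℝ) (hn : ∀ o, 0 ≤ n o) {a b : ℝ} (ha : 0 ≤ a) (hb : b ≤ 0)
    {Sp Sm : Finset O} (hdisj : Disjoint Sp Sm) (hSpne : Sp.Nonempty) (hSmne : Sm.Nonempty)
    (hSp : ∀ o ∈ Sp, A o = a) (hSm : ∀ o ∈ Sm, A o = b)
    (hout : ∀ o, o ∉ Sp → o ∉ Sm → n o = 0) :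
    a * (Sp.inf' hSpne pref * ∑ i ∈ Sp, n i) + b * (Sm.sup' hSmne pref * ∑ j ∈ Sm, n j) ≤
      ∑ o, pref o * (n o * A o) := by
  have hsupport : ∑ o, pref o * (n o * A o) = ∑ o ∈ Sp ∪ Sm, pref o * (n o * A o) := by
    refine (sum_subset (subset_univ _) fun o _ ho => ?_).symm
    rw [mem_union, not_or] at ho
    simp [hout o ho.1 ho.2]
  have hplus : ∑ i ∈ Sp, pref i * (n i * A i) = a * ∑ i ∈ Sp, pref i * n i := by
    rw [mul_sum]
    exact sum_congr rfl fun i hi => by rw [hSp i hi]; ring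
  have hminus : ∑ j ∈ Sm, pref j * (n j * A j) = b * ∑ j ∈ Sm, pref j * n j := by
    rw [mul_sum]
    exact sum_congr rfl fun j hj => by rw [hSm j hj]; ring
  rw [hsupport, sum_union hdisj, hplus, hminus]
  exact add_le_add
    (mul_le_mul_of_nonneg_left (inf'_mul_sum_le_sum_mul hSpne pref n fun i _ => hn i) ha)
    (mul_le_mul_of_nonpos_left (sum_mul_le_sup'_mul_sum hSmne pref n fun j _ => hn j) hb)

theorem stmt5_general {O : Type*} [Fintype O] [DecidableEq O] (pref : O → ℝ)
    (hpos : ∀ o, 0 < pref o) (hsum : ∑ o, pref o = 1)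
    (β σ : ℝ) (hβ : 0 < β) (hσ : 0 < σ)
    (G : ℕ) (hG : 1 ≤ G)
    (N : O → ℕ)
    (pacc : ℝ) (hp0 : 0 ≤ pacc) (hp1 : pacc ≤ 1)
    (Aplus Aminus : ℝ)
    (hAplus : Aplus = (1 - pacc) / σ) (hAminus : Aminus = -pacc / σ)
    (Sp Sm : Finset O) (hdisj : Disjoint Sp Sm)
    (hSpne : Sp.Nonempty) (hSmne : Sm.Nonempty)
    (A : O → ℝ)
    (hSp : ∀ o ∈ Sp, A o = Aplus ∧ 0 < N o)
    (hSm : ∀ o ∈ Sm, A o = Aminus ∧ 0 < N o)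
    (hout : ∀ o, o ∉ Sp → o ∉ Sm → N o = 0)
    (hNp : (∑ i ∈ Sp, (N i : ℝ)) = G * pacc)
    (hNm : (∑ j ∈ Sm, (N j : ℝ)) = G * (1 - pacc))
    (Δπ : ℝ)
    (hΔ : Δπ = (Sp.inf' hSpne pref) - (Sm.sup' hSmne pref))
    (Z' : ℝ) (hZ' : Z' = ∑ o, pref o * Real.exp ((N o : ℝ) * A o / (β * G)))
    (phat : O → ℝ)
    (hphat : ∀ o, phat o = pref o * Real.exp ((N o : ℝ) * A o / (β * G)) / Z') :
    1 + (pacc * (1 - pacc) / (β * σ)) * Δπ ≤ Z' ∧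
    (0 < Δπ → 0 < pacc → pacc < 1 →
      1 < Z' ∧ ∀ o, N o = 0 → phat o < pref o) := by
  have hβG : 0 < β * G := mul_pos hβ (by exact_mod_cast hG)
  have hlin : 1 + (∑ o, pref o * (N o * A o)) / (β * G) ≤ Z' := by
    simpa only [hZ', sum_div, mul_div_assoc] using Real.one_add_sum_mul_le_sum_mul_exp univ pref
      (fun o => N o * A o / (β * G)) (fun o _ => (hpos o).le) hsum
  have hmass := sum_mul_binary_advantage_ge pref (fun o => (N o : ℝ)) A
    (fun o => (N o).cast_nonneg)
    (hAplus ▸ div_nonneg (sub_nonneg.2 hp1) hσ.le)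
    (hAminus ▸ div_nonpos_of_nonpos_of_nonneg (neg_nonpos.2 hp0) hσ.le)
    hdisj hSpne hSmne (fun o ho => (hSp o ho).1) (fun o ho => (hSm o ho).1)
    fun o h₁ h₂ => by rw [hout o h₁ h₂, Nat.cast_zero]
  have hcoef : pacc * (1 - pacc) / (β * σ) * Δπ =
      (Aplus * (Sp.inf' hSpne pref * (G * pacc)) +
        Aminus * (Sm.sup' hSmne pref * (G * (1 - pacc)))) / (β * G) := by
    rw [hΔ, hAplus, hAminus]
    field_simp
    ring
  have hbound : 1 + pacc * (1 - pacc) / (β * σ) * Δπ ≤ Z' := by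
    rw [hcoef, ← hNp, ← hNm]
    exact (add_le_add_right (div_le_div_of_nonneg_right hmass hβG.le) 1).trans hlin
  refine ⟨hbound, fun hΔpos hpacc_pos hpacc_lt => ?_⟩
  have hZ1 : 1 < Z' := lt_of_lt_of_le (lt_add_of_pos_right 1 <| mul_pos
    (div_pos (mul_pos hpacc_pos (sub_pos.2 hpacc_lt)) (mul_pos hβ hσ)) hΔpos) hbound
  refine ⟨hZ1, fun o hNo => ?_⟩
  rw [hphat, hNo, Nat.cast_zero, zero_mul, zero_div, Real.exp_zero, mul_one]
  exact div_lt_self (hpos o) hZ1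

theorem stmt5 {O : Type*} [Fintype O] [DecidableEq O] (pref : O → ℝ)
    (hpos : ∀ o, 0 < pref o) (hsum : ∑ o, pref o = 1)
    (β σ : ℝ) (hβ : 0 < β) (hσ : 0 < σ)
    (G : ℕ) (hG : 1 ≤ G)
    (N : O → ℕ) (hN : ∑ o, N o = G)
    (pacc : ℝ) (hp0 : 0 ≤ pacc) (hp1 : pacc ≤ 1)
    (Aplus Aminus : ℝ)
    (hAplus : Aplus = (1 - pacc) / σ) (hAminus : Aminus = -pacc / σ)
    (Sp Sm : Finset O) (hdisj : Disjoint Sp Sm)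
    (hSpne : Sp.Nonempty) (hSmne : Sm.Nonempty)
    (A : O → ℝ)
    (hSp : ∀ o ∈ Sp, A o = Aplus ∧ 0 < N o)
    (hSm : ∀ o ∈ Sm, A o = Aminus ∧ 0 < N o)
    (hout : ∀ o, o ∉ Sp → o ∉ Sm → N o = 0)
    (hNp : (∑ i ∈ Sp, (N i : ℝ)) = G * pacc)
    (hNm : (∑ j ∈ Sm, (N j : ℝ)) = G * (1 - pacc))
    (Δπ : ℝ)
    (hΔ : Δπ = (Sp.inf' hSpne pref) - (Sm.sup' hSmne pref))
    (Z' : ℝ) (hZ' : Z' = ∑ o, pref o * Real.exp ((N o : ℝ) * A o / (β * G)))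
    (phat : O → ℝ)
    (hphat : ∀ o, phat o = pref o * Real.exp ((N o : ℝ) * A o / (β * G)) / Z') :
    1 + (pacc * (1 - pacc) / (β * σ)) * Δπ ≤ Z' ∧
    (0 < Δπ → 0 < pacc → pacc < 1 →
      1 < Z' ∧ ∀ o, N o = 0 → phat o < pref o) :=
  stmt5_general pref hpos hsum β σ hβ hσ G hG N pacc hp0 hp1 Aplus Aminus hAplus hAminus Sp Sm hdisj
    hSpne hSmne A hSp hSm hout hNp hNm Δπ hΔ Z' hZ' phat hphat
end

section
/- Let O be a finite set, π_ref and π_t positive probability distributions on O, β > 0, η > 0 with ηβ < 1, counts N : O → ℕ summing to G, and advantages A : O → ℝ. Let π̂(o) = π_ref(o)·exp(N(o)A(o)/(βG))/Z' be the batch-optimal policy. Define the updated log-probabilities by gradient ascent in log-space on the empirical objective: log π_{t+1}(o) = log π_t(o) + η·[N(o)A(o)/G − β(log π_t(o) − log π_ref(o) + 1)] + C, with C chosen so π_{t+1} is normalized. Then π_{t+1}(o) ∝ π_t(o)^{1−ηβ} · π̂(o)^{ηβ}, i.e., the updated policy is the normalized geometric interpolation between the current policy and the batch-optimal policy with weight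 ηβ. -/
/-!
Since `log π̂ = log π_ref + N A / (β G) - log Z'`, the log-space gradient
`N A / G - β (log π_t - log π_ref + 1)` equals `β (log π̂ - log π_t)` up to an additive constant.
Hence `log π_{t+1} = (1 - ηβ) log π_t + ηβ log π̂ + const`, and exponentiating gives the claim.
-/

open Finset Real

lemma log_mul_exp_div {r Z : ℝ} (hr : 0 < r) (hZ : 0 < Z) (s : ℝ) :
    log (r * exp s / Z) = log r + s - log Z := by
  rw [log_div (mul_pos hr (exp_pos s)).ne' hZ.ne', log_mul hr.ne' (exp_pos s).ne', log_exp]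

lemma eq_exp_mul_rpow_mul_rpow_of_log_eq {p q h t k : ℝ} (hp : 0 < p) (hq : 0 < q) (hh : 0 < h)
    (hlog : log p = k + (1 - t) * log q + t * log h) :
    p = exp k * q ^ (1 - t) * h ^ t := by
  rw [← exp_log hp, hlog, exp_add, exp_add, rpow_def_of_pos hq, rpow_def_of_pos hh,
    mul_comm (log q), mul_comm (log h)]

theorem stmt10_general {O : Type*} [Fintype O] (pref pt : O → ℝ)
    (hrefpos : ∀ o, 0 < pref o)
    (htpos : ∀ o, 0 < pt o)
    (β η : ℝ) (hβ : 0 < β)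
    (G : ℕ)
    (N : O → ℕ) (A : O → ℝ)
    (Z' : ℝ) (hZ' : Z' = ∑ o, pref o * Real.exp ((N o : ℝ) * A o / (β * G)))
    (phat : O → ℝ)
    (hphat : ∀ o, phat o = pref o * Real.exp ((N o : ℝ) * A o / (β * G)) / Z')
    (pnext : O → ℝ) (C : ℝ)
    (hnextpos : ∀ o, 0 < pnext o)
    (hupdate : ∀ o, Real.log (pnext o) =
      Real.log (pt o) +
        η * ((N o : ℝ) * A o / G - β * (Real.log (pt o) - Real.log (pref o) + 1)) + C) :
    ∃ c : ℝ, 0 < c ∧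
      ∀ o, pnext o = c * (pt o) ^ (1 - η * β) * (phat o) ^ (η * β) := by
  refine ⟨exp (η * β * (log Z' - 1) + C), exp_pos _, fun o => ?_⟩
  have hterm : ∀ o, 0 < pref o * exp ((N o : ℝ) * A o / (β * G)) :=
    fun o => mul_pos (hrefpos o) (exp_pos _)
  have hZ'pos : 0 < Z' := hZ' ▸ sum_pos (fun o _ => hterm o) ⟨o, mem_univ o⟩
  have hphatpos : 0 < phat o := hphat o ▸ div_pos (hterm o) hZ'pos
  have hlogphat : log (phat o) = log (pref o) + N o * A o / G / β - log Z' := by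
    rw [hphat o, log_mul_exp_div (hrefpos o) hZ'pos, div_mul_eq_div_div_swap]
  refine eq_exp_mul_rpow_mul_rpow_of_log_eq (hnextpos o) (htpos o) hphatpos ?_
  rw [hupdate o, hlogphat]
  field_simp
  ring

theorem stmt10 {O : Type*} [Fintype O] (pref pt : O → ℝ)
    (hrefpos : ∀ o, 0 < pref o) (hrefsum : ∑ o, pref o = 1)
    (htpos : ∀ o, 0 < pt o) (htsum : ∑ o, pt o = 1)
    (β η : ℝ) (hβ : 0 < β) (hη : 0 < η) (hηβ : η * β < 1)
    (G : ℕ) (hG : 1 ≤ G)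
    (N : O → ℕ) (hN : ∑ o, N o = G) (A : O → ℝ)
    (Z' : ℝ) (hZ' : Z' = ∑ o, pref o * Real.exp ((N o : ℝ) * A o / (β * G)))
    (phat : O → ℝ)
    (hphat : ∀ o, phat o = pref o * Real.exp ((N o : ℝ) * A o / (β * G)) / Z')
    (pnext : O → ℝ) (C : ℝ)
    (hnextpos : ∀ o, 0 < pnext o) (hnextsum : ∑ o, pnext o = 1)
    (hupdate : ∀ o, Real.log (pnext o) =
      Real.log (pt o) +
        η * ((N o : ℝ) * A o / G - β * (Real.log (pt o) - Real.log (pref o) + 1)) + C) :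
    ∃ c : ℝ, 0 < c ∧
      ∀ o, pnext o = c * (pt o) ^ (1 - η * β) * (phat o) ^ (η * β) :=
  stmt10_general pref pt hrefpos htpos β η hβ G N A Z' hZ' phat hphat pnext C hnextpos hupdate
end
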